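/- Let (θ_n) be any sequence of real numbers, let α > 1, and let L > 0. Then there exists a real number λ with L ≤ λ ≤ L + 1/(α−1) such that for every n ≥ 1, ‖λα^n − θ_n‖ ≤ 1/(2(α−1)). -/

import Mathlib

/-- For a real number `x`, the distance from `x` to the nearest integer. -/
noncomputable def distNearestInt (x : ℝ) : ℝ := |x - round x|

/-!
Put `c = 1 / (α - 1)`, so that `c + 1 = c α`. Starting from `[L, L + c]`, choose nested intervals
`I_n` of length `c / α^n`: multiplied by `α^(n+1)`, the interval `I_n` has length `c + 1`, so it
contains a whole window `[m + θ_{n+1} - c/2, m + θ_{n+1} + c/2]` with `m ∈ ℤ`, and `I_{n+1}` is its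
preimage. Any point of `⋂ I_n` is a valid `λ`.
-/

theorem distNearestInt_le_abs_sub_int (x : ℝ) (m : ℤ) : distNearestInt x ≤ |x - m| :=
  round_le x m

theorem exists_subinterval_distNearestInt_mul_sub_le {s : ℝ} (hs : 0 < s) (d a t : ℝ) :
    ∃ a', a ≤ a' ∧ a' + d / s ≤ a + (d + 1) / s ∧
      ∀ x ∈ Set.Icc a' (a' + d / s), distNearestInt (x * s - t) ≤ d / 2 := by
  set m : ℤ := ⌈a * s + d / 2 - t⌉
  have hm_ge : a * s + d / 2 - t ≤ m := Int.le_ceil _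
  have hm_lt : (m : ℝ) < a * s + d / 2 - t + 1 := Int.ceil_lt_add_one _
  refine ⟨(m + t - d / 2) / s, ?_, ?_, fun x hx => ?_⟩
  · rw [le_div_iff₀ hs]
    linarith
  · rw [← add_div, div_le_iff₀ hs, add_mul, div_mul_cancel₀ _ hs.ne']
    linarith
  · obtain ⟨hx_ge, hx_le⟩ := hx
    rw [div_le_iff₀ hs] at hx_ge
    rw [← add_div, le_div_iff₀ hs] at hx_le
    refine (distNearestInt_le_abs_sub_int _ m).trans (abs_le.mpr ⟨?_, ?_⟩) <;> linarith

theorem exists_mem_Icc_forall_of_nested_step (w : ℕ → ℝ) (hw : ∀ n, 0 ≤ w n)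
    (P : ℕ → ℝ → Prop)
    (step : ∀ n a, ∃ a', a ≤ a' ∧ a' + w (n + 1) ≤ a + w n ∧
      ∀ x ∈ Set.Icc a' (a' + w (n + 1)), P n x) (a₀ : ℝ) :
    ∃ x ∈ Set.Icc a₀ (a₀ + w 0), ∀ n, P n x := by
  choose next h_le h_add h_P using step
  let a : ℕ → ℝ := fun n => Nat.rec a₀ next n
  have h_mono : Monotone a := monotone_nat_of_le_succ fun n => h_le n (a n)
  have h_anti : Antitone fun n => a n + w n :=
    antitone_nat_of_succ_le fun n => h_add n (a n)
  have h_mem := Set.mem_iInter.mp <|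
    h_mono.ciSup_mem_iInter_Icc_of_antitone h_anti fun n => le_add_of_nonneg_right (hw n)
  exact ⟨_, h_mem 0, fun n => h_P n (a n) _ (h_mem (n + 1))⟩

theorem exists_lambda_alpha_pow_close_to_sequence_general
    (θ : ℕ → ℝ) (α L : ℝ) (hα : 1 < α) :
    ∃ lam : ℝ, L ≤ lam ∧ lam ≤ L + 1 / (α - 1) ∧
      ∀ n : ℕ, 1 ≤ n → distNearestInt (lam * α ^ n - θ n) ≤ 1 / (2 * (α - 1)) := by
  have hα₀ : 0 < α := by linarith
  set c := 1 / (α - 1) with hc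
  have hc_nonneg : 0 ≤ c := by rw [hc]; exact (one_div_pos.mpr (sub_pos.mpr hα)).le
  have h_width (n : ℕ) : (c + 1) / α ^ (n + 1) = c / α ^ n := by
    rw [hc]
    field_simp [(sub_pos.mpr hα).ne']
    ring
  obtain ⟨lam, ⟨h_lower, h_upper⟩, h_close⟩ :=
    exists_mem_Icc_forall_of_nested_step (fun n => c / α ^ n) (fun n => by positivity)
      (fun n x => distNearestInt (x * α ^ (n + 1) - θ (n + 1)) ≤ c / 2)
      (fun n a => by
        simpa only [h_width] using
          exists_subinterval_distNearestInt_mul_sub_le (pow_pos hα₀ (n + 1)) c a (θ (n + 1)))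
      L
  refine ⟨lam, h_lower, by simpa using h_upper, fun n hn => ?_⟩
  obtain ⟨k, rfl⟩ := Nat.exists_eq_add_of_le' hn
  rw [div_div, mul_comm] at h_close
  exact h_close k

theorem exists_lambda_alpha_pow_close_to_sequence
    (θ : ℕ → ℝ) (α L : ℝ) (hα : 1 < α) (hL : 0 < L) :
    ∃ lam : ℝ, L ≤ lam ∧ lam ≤ L + 1 / (α - 1) ∧
      ∀ n : ℕ, 1 ≤ n → distNearestInt (lam * α ^ n - θ n) ≤ 1 / (2 * (α - 1)) :=
  exists_lambda_alpha_pow_close_to_sequence_general θ α L hα
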